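/- arXiv:1412.1413 — 5 statements merged into one kernel-verified Lean document; each statement's English description precedes it below -/
import Mathlib

section
/- Under hypotheses (H1) and (H2), for every b' ∈ Ω, with δ > 0 as in (H1)–(H2), there exists α > 0 such that for all t ∈ [0, α] and all b in the ball B_{δ/2}(b') one has ‖f_{2t}(b) − 2 f_t(b) + b‖ ≤ (1/10) ‖f_t(b) − b‖. -/
open Filter Metric Set Topology

/-! Put `v = f_t(b) - b` and restrict the displacement `x ↦ f_t(x) - x` to the complex line
`z ↦ b + z v`. On the disc `|z| < (δ/2)/‖v‖` the line stays in `B_δ(b')`, where (H1) makes the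
displacement at most `ε` for small `t`, so the Schwarz lemma bounds the difference of its values
at `z = 1` and `z = 0` by `2ε‖v‖/(δ/2)`; taking `ε = δ/40` gives the factor `1/10`. These values
are `f_{2t}(b) - f_t(b)` and `f_t(b) - b`. -/

section SecondDifference

variable {E : Type*} [NormedAddCommGroup E] [NormedSpace ℂ E]

lemma add_smul_mem_ball_of_mem_ball_div {b v : E} {ρ : ℝ} {z : ℂ}
    (hz : z ∈ ball (0 : ℂ) (ρ / ‖v‖)) : b + z • v ∈ ball b ρ := by
  rcases eq_or_ne v 0 with rfl | hv
  · simp at hz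
  rw [mem_ball, dist_zero_right, lt_div_iff₀ (norm_pos_iff.mpr hv)] at hz
  rwa [mem_ball, dist_eq_norm, add_sub_cancel_left, norm_smul]

lemma norm_second_difference_le {g : E → E} {s : Set E} (hg : DifferentiableOn ℂ g s)
    {ε ρ : ℝ} (hgs : ∀ x ∈ s, ‖g x - x‖ ≤ ε) {b : E} (hρ : ball b ρ ⊆ s)
    (hbρ : ‖g b - b‖ < ρ) :
    ‖g (g b) - g b - g b + b‖ ≤ 2 * ε / ρ * ‖g b - b‖ := by
  rw [show g (g b) - g b - g b + b = g (g b) - g b - (g b - b) by abel]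
  generalize hv : g b - b = v at hbρ ⊢
  rcases eq_or_ne v 0 with rfl | hv0
  · simp [sub_eq_zero.mp hv]
  set h : ℂ → E := fun z => g (b + z • v) - (b + z • v)
  have hline : MapsTo (fun z : ℂ => b + z • v) (ball 0 (ρ / ‖v‖)) s :=
    fun z hz => hρ (add_smul_mem_ball_of_mem_ball_div hz)
  have hdiff : DifferentiableOn ℂ h (ball 0 (ρ / ‖v‖)) := by
    have hlin : Differentiable ℂ (fun z : ℂ => b + z • v) := by fun_prop
    exact (hg.comp hlin.differentiableOn hline).sub hlin.differentiableOn
  have hh0 : h 0 = v := by simp [h, hv]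
  have hh1 : h 1 = g (g b) - g b := by
    simp only [h, one_smul, show b + v = g b by rw [← hv, add_sub_cancel]]
  have h1 : (1 : ℂ) ∈ ball 0 (ρ / ‖v‖) := by
    rwa [mem_ball, dist_zero_right, norm_one, one_lt_div (norm_pos_iff.mpr hv0)]
  have hmaps : MapsTo h (ball 0 (ρ / ‖v‖)) (closedBall (h 0) (2 * ε)) := by
    intro z hz
    rw [mem_closedBall, dist_eq_norm, two_mul]
    exact (norm_sub_le _ _).trans
      (add_le_add (hgs _ (hline hz)) (hgs _ (hline (mem_ball_self (nonempty_ball.mp ⟨1, h1⟩)))))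
  have hschwarz := Complex.dist_le_div_mul_dist_of_mapsTo_ball hdiff hmaps h1
  rw [hh0, hh1, dist_eq_norm, dist_zero_right, norm_one, mul_one] at hschwarz
  calc ‖g (g b) - g b - v‖ ≤ 2 * ε / (ρ / ‖v‖) := hschwarz
    _ = 2 * ε / ρ * ‖v‖ := by rw [div_div_eq_mul_div, mul_div_right_comm]

end SecondDifference

lemma TendstoUniformlyOn.exists_pos_forall_Icc_norm_sub_le {E : Type*} [SeminormedAddCommGroup E]
    {f : ℝ → E → E} {s : Set E} (hf : TendstoUniformlyOn f id (𝓝[>] 0) s)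
    (hf0 : ∀ x ∈ s, f 0 x = x) {ε : ℝ} (hε : 0 < ε) :
    ∃ α > 0, ∀ t ∈ Icc 0 α, ∀ x ∈ s, ‖f t x - x‖ ≤ ε := by
  obtain ⟨α, hα, hsub⟩ := mem_nhdsGT_iff_exists_Ioc_subset.mp
    (Metric.tendstoUniformlyOn_iff.mp hf ε hε)
  refine ⟨α, hα, fun t ht x hx => ?_⟩
  rcases ht.1.eq_or_lt with rfl | htpos
  · simp [hf0 x hx, hε.le]
  · rw [← dist_eq_norm, dist_comm]
    exact (hsub ⟨htpos, ht.2⟩ x hx).le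

theorem semigroup_second_difference_small_general
    {A : Type*} [NormedAddCommGroup A] [NormedSpace ℂ A]
    (Ω : Set A)
    (f : ℝ → A → A)
    (hf0 : ∀ b ∈ Ω, f 0 b = b)
    (hsemi : ∀ s t : ℝ, 0 ≤ s → 0 ≤ t → ∀ b ∈ Ω, f (s + t) b = f s (f t b))
    (hanal : ∀ t : ℝ, 0 ≤ t → AnalyticOnNhd ℂ (f t) Ω)
    (b' : A) (δ : ℝ) (hδ : 0 < δ) (hball : ball b' δ ⊆ Ω)
    (hH1 : TendstoUniformlyOn (fun t b => f t b) id (𝓝[>] (0:ℝ)) (ball b' δ)) :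
    ∃ α > 0, ∀ t ∈ Icc (0:ℝ) α, ∀ b ∈ ball b' (δ/2),
      ‖f (2*t) b - f t b - f t b + b‖ ≤ (1/10) * ‖f t b - b‖ := by
  obtain ⟨α, hα, hsmall⟩ := hH1.exists_pos_forall_Icc_norm_sub_le
    (fun x hx => hf0 x (hball hx)) (show 0 < δ / 40 by positivity)
  refine ⟨α, hα, fun t ht b hb => ?_⟩
  have hbδ : ball b (δ / 2) ⊆ ball b' δ := ball_subset_ball' (by rw [mem_ball] at hb; linarith)
  have hbb' : b ∈ ball b' δ := hbδ (mem_ball_self (by positivity))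
  have hbound := norm_second_difference_le ((hanal t ht.1).differentiableOn.mono hball)
    (hsmall t ht) hbδ ((hsmall t ht b hbb').trans_lt (by linarith))
  rw [two_mul, hsemi t t ht.1 ht.1 b (hball hbb')]
  convert hbound using 2
  field_simp
  norm_num

/-- For a composition semigroup of analytic self-maps of an open set `Ω` in a complex
Banach space satisfying (H1) and (H2) near `b'` (with parameter `δ`), there is `α > 0`
with `‖f_{2t}(b) - 2 f_t(b) + b‖ ≤ (1/10) ‖f_t(b) - b‖` for `t ∈ [0, α]`,
`b ∈ B_{δ/2}(b')`. -/
theorem semigroup_second_difference_small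
    {A : Type*} [NormedAddCommGroup A] [NormedSpace ℂ A] [CompleteSpace A]
    (Ω : Set A) (hΩ : IsOpen Ω)
    (f : ℝ → A → A)
    (hf0 : ∀ b ∈ Ω, f 0 b = b)
    (hmaps : ∀ t : ℝ, 0 ≤ t → Set.MapsTo (f t) Ω Ω)
    (hsemi : ∀ s t : ℝ, 0 ≤ s → 0 ≤ t → ∀ b ∈ Ω, f (s + t) b = f s (f t b))
    (hanal : ∀ t : ℝ, 0 ≤ t → AnalyticOnNhd ℂ (f t) Ω)
    (b' : A) (hb' : b' ∈ Ω) (δ : ℝ) (hδ : 0 < δ) (hball : ball b' δ ⊆ Ω)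
    (hH1 : TendstoUniformlyOn (fun t b => f t b) id (𝓝[>] (0:ℝ)) (ball b' δ))
    (hH2 : ∀ T > 0, ∃ C, ∀ t ∈ Icc (0:ℝ) T, ∀ b ∈ ball b' δ, ‖f t b - b‖ ≤ C) :
    ∃ α > 0, ∀ t ∈ Icc (0:ℝ) α, ∀ b ∈ ball b' (δ/2),
      ‖f (2*t) b - f t b - f t b + b‖ ≤ (1/10) * ‖f t b - b‖ :=
  semigroup_second_difference_small_general Ω f hf0 hsemi hanal b' δ hδ hball hH1
end

section
/- Under hypotheses (H1) and (H2), for every b' ∈ Ω, with δ > 0 as in (H1)–(H2), there exist α > 0 and M > 0 such that for all t ∈ [0, α] and all b in the ball B_{δ/2}(b') one has ‖f_t(b) − b‖ ≤ M t^{2/3}. -/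
open Metric Set Topology

/-!
If `f_s` moves every point of `B_δ(b')` by at most `η`, the Schwarz lemma applied to the
displacement `y ↦ f_s y - y` on `B_{δ/2}(b)` shows that the displacement varies by at most
`(4η/δ)‖f_s b - b‖` between `b` and `f_s b`. Hence `f_{2s} = f_s ∘ f_s` moves `b` at least
`2 - 4η/δ` times as far as `f_s` does. By (H1) this factor is `2^{2/3}` for all small `s`, and
doubling `t` until it lands in `(α, 2α]`, where (H2) bounds the displacement, gives the
`t^{2/3}` estimate.
-/

theorem two_sub_mul_norm_sub_le_norm_comp_self_sub {E : Type*} [NormedAddCommGroup E]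
    [NormedSpace ℂ E] {g : E → E} {x : E} {r η : ℝ}
    (hd : DifferentiableOn ℂ g (ball x r)) (hη : ∀ y ∈ ball x r, ‖g y - y‖ ≤ η)
    (hx : ‖g x - x‖ < r) :
    (2 - 2 * η / r) * ‖g x - x‖ ≤ ‖g (g x) - x‖ := by
  set φ : E → E := fun y => g y - y
  have hr : 0 < r := (norm_nonneg _).trans_lt hx
  have hx_mem : x ∈ ball x r := mem_ball_self hr
  have hmaps : MapsTo φ (ball x r) (closedBall (φ x) (2 * η)) := fun y hy => by
    rw [mem_closedBall, dist_eq_norm]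
    linarith [norm_sub_le (φ y) (φ x), hη y hy, hη x hx_mem]
  have hschwarz : ‖φ (g x) - φ x‖ ≤ 2 * η / r * ‖g x - x‖ := by
    simpa only [dist_eq_norm] using Complex.dist_le_div_mul_dist_of_mapsTo_ball (f := φ)
      (hd.sub differentiableOn_id) hmaps (mem_ball_iff_norm.mpr hx)
  have hsplit : g (g x) - x = (2 : ℝ) • φ x + (φ (g x) - φ x) := by
    simp only [φ, two_smul]; abel
  calc (2 - 2 * η / r) * ‖g x - x‖ = ‖(2 : ℝ) • φ x‖ - 2 * η / r * ‖g x - x‖ := by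
        rw [norm_smul, Real.norm_two]; ring
    _ ≤ ‖(2 : ℝ) • φ x‖ - ‖φ (g x) - φ x‖ := by linarith
    _ ≤ ‖g (g x) - x‖ := by rw [hsplit]; exact norm_sub_le_norm_add _ _

theorem two_sub_mul_norm_sub_le_norm_comp_self_sub_of_mem_ball {E : Type*}
    [NormedAddCommGroup E] [NormedSpace ℂ E] {g : E → E} {x₀ x : E} {δ η : ℝ}
    (hd : DifferentiableOn ℂ g (ball x₀ δ)) (hη : ∀ y ∈ ball x₀ δ, ‖g y - y‖ < η)
    (hηδ : η ≤ δ / 2) (hx : x ∈ ball x₀ (δ / 2)) :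
    (2 - 4 * η / δ) * ‖g x - x‖ ≤ ‖g (g x) - x‖ := by
  have hsub : ball x (δ / 2) ⊆ ball x₀ δ := ball_subset_ball' (by linarith [mem_ball.mp hx])
  have hxδ : x ∈ ball x₀ δ := hsub (mem_ball_self (by linarith [dist_nonneg.trans_lt hx]))
  convert two_sub_mul_norm_sub_le_norm_comp_self_sub (hd.mono hsub)
    (fun y hy => (hη y (hsub hy)).le) ((hη x hxδ).trans_le hηδ) using 3
  ring

theorem le_mul_div_rpow_of_doubling {D : ℝ → ℝ} {p α C t : ℝ} (hp : 0 ≤ p) (hC : 0 ≤ C)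
    (hdouble : ∀ s ∈ Ioc 0 α, 2 ^ p * D s ≤ D (2 * s))
    (hbound : ∀ s ∈ Ioc α (2 * α), D s ≤ C) (ht : t ∈ Ioc 0 α) :
    D t ≤ C * (t / α) ^ p := by
  have hα : 0 < α := ht.1.trans_le ht.2
  have hscale : ∀ s, 0 < s → (2 * s / α) ^ p = 2 ^ p * (s / α) ^ p := fun s hs => by
    rw [mul_div_assoc, Real.mul_rpow zero_le_two (div_nonneg hs.le hα.le)]
  obtain ⟨n, hn⟩ := pow_unbounded_of_one_lt (α / t) one_lt_two
  induction n generalizing t with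
  | zero =>
    rw [pow_zero, div_lt_one ht.1] at hn
    exact absurd ht.2 hn.not_ge
  | succ n ih =>
    have hstep : 2 ^ p * D t ≤ 2 ^ p * (C * (t / α) ^ p) := by
      refine (hdouble t ht).trans ?_
      rw [mul_left_comm, ← hscale t ht.1]
      rcases lt_or_ge α (2 * t) with hlarge | hsmall
      · calc D (2 * t) ≤ C := hbound (2 * t) ⟨hlarge, by linarith [ht.2]⟩
          _ ≤ C * (2 * t / α) ^ p :=
            le_mul_of_one_le_right hC (Real.one_le_rpow ((one_le_div hα).mpr hlarge.le) hp)
      · have h2t : 2 * t ∈ Ioc 0 α := ⟨by linarith [ht.1], hsmall⟩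
        refine ih h2t ?_
        rw [div_lt_iff₀ ht.1, pow_succ] at hn
        rw [div_lt_iff₀ h2t.1]
        linarith
    exact le_of_mul_le_mul_left hstep (by positivity)

theorem TendstoUniformlyOn.exists_norm_sub_lt_of_nhdsGT {ι E : Type*} [NormedAddCommGroup E]
    {F : ℝ → ι → E} {g : ι → E} {S : Set ι} (h : TendstoUniformlyOn F g (𝓝[>] 0) S)
    {ε : ℝ} (hε : 0 < ε) : ∃ α > 0, ∀ s ∈ Ioc 0 α, ∀ y ∈ S, ‖F s y - g y‖ < ε := by
  obtain ⟨α, hα, hsub⟩ := mem_nhdsGT_iff_exists_Ioc_subset.mp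
    (Metric.tendstoUniformlyOn_iff.mp h ε hε)
  exact ⟨α, hα, fun s hs y hy => by simpa [dist_eq_norm'] using hsub hs y hy⟩

theorem semigroup_holder_two_thirds_general
    {A : Type*} [NormedAddCommGroup A] [NormedSpace ℂ A]
    (Ω : Set A)
    (f : ℝ → A → A)
    (hf0 : ∀ b ∈ Ω, f 0 b = b)
    (hsemi : ∀ s t : ℝ, 0 ≤ s → 0 ≤ t → ∀ b ∈ Ω, f (s + t) b = f s (f t b))
    (hanal : ∀ t : ℝ, 0 ≤ t → AnalyticOnNhd ℂ (f t) Ω)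
    (b' : A) (δ : ℝ) (hδ : 0 < δ) (hball : ball b' δ ⊆ Ω)
    (hH1 : TendstoUniformlyOn (fun t b => f t b) id (𝓝[>] (0:ℝ)) (ball b' δ))
    (hH2 : ∀ T > 0, ∃ C, ∀ t ∈ Icc (0:ℝ) T, ∀ b ∈ ball b' δ, ‖f t b - b‖ ≤ C) :
    ∃ α > 0, ∃ M > 0, ∀ t ∈ Icc (0:ℝ) α, ∀ b ∈ ball b' (δ/2),
      ‖f t b - b‖ ≤ M * t ^ ((2:ℝ)/3) := by
  set p : ℝ := 2 / 3
  have hp2 : (2 : ℝ) ^ p < 2 := by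
    simpa using Real.rpow_lt_rpow_of_exponent_lt one_lt_two (show p < 1 by norm_num)
  set η := δ * (2 - 2 ^ p) / 4
  have hηδ : η ≤ δ / 2 := by
    simp only [η]; nlinarith [Real.rpow_pos_of_pos two_pos p]
  obtain ⟨α, hα, hsmall⟩ := hH1.exists_norm_sub_lt_of_nhdsGT (by positivity : 0 < η)
  obtain ⟨C, hC⟩ := hH2 (2 * α) (by positivity)
  have hdouble : ∀ b ∈ ball b' (δ / 2), ∀ s ∈ Ioc 0 α,
      2 ^ p * ‖f s b - b‖ ≤ ‖f (2 * s) b - b‖ := fun b hb s hs => by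
    have key := two_sub_mul_norm_sub_le_norm_comp_self_sub_of_mem_ball
      ((hanal s hs.1.le).differentiableOn.mono hball) (hsmall s hs) hηδ hb
    rwa [show 2 - 4 * η / δ = 2 ^ p by field_simp; ring, ← hsemi s s hs.1.le hs.1.le b
      (hball (ball_subset_ball (by linarith) hb)), ← two_mul] at key
  refine ⟨α, hα, max C 1 / α ^ p, by positivity, fun t ht b hb => ?_⟩
  have hbδ : b ∈ ball b' δ := ball_subset_ball (by linarith) hb
  rcases ht.1.eq_or_lt with rfl | ht0
  · simp [hf0 b (hball hbδ), Real.zero_rpow (by norm_num [p] : p ≠ 0)]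
  calc ‖f t b - b‖ ≤ max C 1 * (t / α) ^ p :=
        le_mul_div_rpow_of_doubling (D := fun s => ‖f s b - b‖) (by positivity) (by positivity)
          (hdouble b hb) (fun s hs => (hC s ⟨by linarith [hs.1], hs.2⟩ b hbδ).trans
          (le_max_left _ _)) ⟨ht0, ht.2⟩
    _ = max C 1 / α ^ p * t ^ p := by rw [Real.div_rpow ht0.le hα.le]; ring

/-- For a composition semigroup of analytic self-maps of an open set `Ω` in a complex
Banach space satisfying (H1) and (H2) near `b'` (with parameter `δ`), there are
`α, M > 0` with `‖f_t(b) - b‖ ≤ M t^{2/3}` for `t ∈ [0, α]`, `b ∈ B_{δ/2}(b')`. -/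
theorem semigroup_holder_two_thirds
    {A : Type*} [NormedAddCommGroup A] [NormedSpace ℂ A] [CompleteSpace A]
    (Ω : Set A) (hΩ : IsOpen Ω)
    (f : ℝ → A → A)
    (hf0 : ∀ b ∈ Ω, f 0 b = b)
    (hmaps : ∀ t : ℝ, 0 ≤ t → Set.MapsTo (f t) Ω Ω)
    (hsemi : ∀ s t : ℝ, 0 ≤ s → 0 ≤ t → ∀ b ∈ Ω, f (s + t) b = f s (f t b))
    (hanal : ∀ t : ℝ, 0 ≤ t → AnalyticOnNhd ℂ (f t) Ω)
    (b' : A) (hb' : b' ∈ Ω) (δ : ℝ) (hδ : 0 < δ) (hball : ball b' δ ⊆ Ω)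
    (hH1 : TendstoUniformlyOn (fun t b => f t b) id (𝓝[>] (0:ℝ)) (ball b' δ))
    (hH2 : ∀ T > 0, ∃ C, ∀ t ∈ Icc (0:ℝ) T, ∀ b ∈ ball b' δ, ‖f t b - b‖ ≤ C) :
    ∃ α > 0, ∃ M > 0, ∀ t ∈ Icc (0:ℝ) α, ∀ b ∈ ball b' (δ/2),
      ‖f t b - b‖ ≤ M * t ^ ((2:ℝ)/3) :=
  semigroup_holder_two_thirds_general Ω f hf0 hsemi hanal b' δ hδ hball hH1 hH2
end

section
/- Under hypotheses (H1) and (H2), for every b' ∈ Ω, with δ > 0 as in (H1)–(H2), there exist α > 0 and M > 0 such that for all t ∈ (0, α] and all b in the ball B_{δ/2}(b') one has both ‖f_{2t}(b) − 2 f_t(b) + b‖ ≤ 2 M t^{4/3} and ‖(f_{2t}(b) − b)/(2t) − (f_t(b) − b)/t‖ ≤ M t^{1/3}. -/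
open Filter Metric Set Topology

/-!
Write `g_t = f_t - id`, so that `f_{2t}(b) - 2 f_t(b) + b = g_t(f_t b) - g_t(b)`. By the Schwarz
lemma, a holomorphic `g` with `‖g‖ ≤ K` on a ball of radius `m` is
`2K/m`-Lipschitz at its centre. For small `t`, (H1) makes `K/m` so small that
`‖f_{2t}(b) - b‖ ≥ 2^{2/3} ‖f_t(b) - b‖`; iterating this doubling inequality down from the scale
`t ∈ (α, 2α]`, where (H2) bounds `g_t`, gives `‖g_t‖ = O(t^{2/3})`. Feeding this bound back into the
Lipschitz estimate makes the second difference `O(t^{2/3} · t^{2/3}) = O(t^{4/3})`, and the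
difference of difference quotients is the second difference divided by `2t`.
-/

section Schwarz

variable {E F : Type*} [NormedAddCommGroup E] [NormedSpace ℂ E]
  [NormedAddCommGroup F] [NormedSpace ℂ F]

theorem norm_sub_le_of_forall_norm_le_of_differentiableOn {g : E → F} {c y : E} {R K : ℝ}
    (hg : DifferentiableOn ℂ g (ball c R)) (hK : ∀ x ∈ ball c R, ‖g x‖ ≤ K)
    (hy : y ∈ ball c R) :
    ‖g y - g c‖ ≤ 2 * K / R * ‖y - c‖ := by
  have hc : c ∈ ball c R := mem_ball_self (pos_of_mem_ball hy)
  have hmaps : MapsTo g (ball c R) (closedBall (g c) (2 * K)) := fun x hx => by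
    rw [mem_closedBall, dist_eq_norm]
    linarith [norm_sub_le (g x) (g c), hK x hx, hK c hc]
  simpa only [dist_eq_norm] using Complex.dist_le_div_mul_dist_of_mapsTo_ball hg hmaps hy

variable {φ : E → E} {b : E} {m K : ℝ}

theorem norm_second_difference_le_s5 (hφ : DifferentiableOn ℂ φ (ball b m))
    (hK : ∀ x ∈ ball b m, ‖φ x - x‖ ≤ K) (hb : ‖φ b - b‖ < m) :
    ‖φ (φ b) - φ b - φ b + b‖ ≤ 2 * K / m * ‖φ b - b‖ := by
  have := norm_sub_le_of_forall_norm_le_of_differentiableOn (hφ.sub differentiableOn_id) hK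
    (mem_ball_iff_norm.2 hb)
  convert this using 2
  simp only [Pi.sub_apply, id]
  abel

theorem norm_second_difference_le_sq (hφ : DifferentiableOn ℂ φ (ball b m))
    (hK : ∀ x ∈ ball b m, ‖φ x - x‖ ≤ K) (hb : ‖φ b - b‖ < m) :
    ‖φ (φ b) - φ b - φ b + b‖ ≤ 2 * K ^ 2 / m := by
  have hm : 0 < m := (norm_nonneg _).trans_lt hb
  have hKb : ‖φ b - b‖ ≤ K := hK b (mem_ball_self hm)
  calc ‖φ (φ b) - φ b - φ b + b‖ ≤ 2 * K / m * ‖φ b - b‖ := norm_second_difference_le_s5 hφ hK hb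
    _ ≤ 2 * K / m * K :=
      mul_le_mul_of_nonneg_left hKb (div_nonneg (by linarith [norm_nonneg (φ b - b)]) hm.le)
    _ = 2 * K ^ 2 / m := by ring

theorem two_sub_mul_norm_sub_le (hφ : DifferentiableOn ℂ φ (ball b m))
    (hK : ∀ x ∈ ball b m, ‖φ x - x‖ ≤ K) (hb : ‖φ b - b‖ < m) :
    (2 - 2 * K / m) * ‖φ b - b‖ ≤ ‖φ (φ b) - b‖ := by
  have htwo : ‖(2 : ℂ) • (φ b - b)‖ = 2 * ‖φ b - b‖ := by simp [norm_smul]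
  have := norm_sub_norm_le ((2 : ℂ) • (φ b - b)) (φ (φ b) - b)
  rw [htwo, norm_sub_rev ((2 : ℂ) • (φ b - b)), show φ (φ b) - b - (2 : ℂ) • (φ b - b)
    = φ (φ b) - φ b - φ b + b by module] at this
  linarith [norm_second_difference_le_s5 hφ hK hb]

end Schwarz

theorem le_mul_div_rpow_of_two_rpow_mul_le {φ : ℝ → ℝ} {α C p : ℝ} (hα : 0 < α) (hp : 0 ≤ p)
    (hC : 0 ≤ C) (hbound : ∀ t ∈ Ioc α (2 * α), φ t ≤ C)
    (hdouble : ∀ t ∈ Ioc 0 α, 2 ^ p * φ t ≤ φ (2 * t)) :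
    ∀ t ∈ Ioc 0 (2 * α), φ t ≤ C * (t / α) ^ p := by
  have hlarge : ∀ t ∈ Ioc α (2 * α), φ t ≤ C * (t / α) ^ p := fun t ht => by
    have : 1 ≤ (t / α) ^ p := Real.one_le_rpow ((one_le_div hα).2 ht.1.le) hp
    nlinarith [hbound t ht]
  have hdyadic : ∀ n : ℕ, ∀ t ∈ Ioc (α / 2 ^ n) (2 * α), φ t ≤ C * (t / α) ^ p := by
    intro n
    induction n with
    | zero => simpa using hlarge
    | succ n ih =>
      intro t ht
      rcases lt_or_ge α t with htα | htα
      · exact hlarge t ⟨htα, ht.2⟩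
      have h0 : 0 < t := lt_of_le_of_lt (by positivity) ht.1
      have h2t : 2 * t ∈ Ioc (α / 2 ^ n) (2 * α) := by
        refine ⟨?_, by linarith⟩
        rw [pow_succ, ← div_div] at ht
        linarith [ht.1]
      have hsplit : (2 * t / α) ^ p = 2 ^ p * (t / α) ^ p := by
        rw [mul_div_assoc, Real.mul_rpow (by norm_num) (by positivity)]
      have := (hdouble t ⟨h0, htα⟩).trans (ih (2 * t) h2t)
      rw [hsplit, mul_left_comm] at this
      exact le_of_mul_le_mul_left this (by positivity)
  intro t ht
  obtain ⟨n, hn⟩ := pow_unbounded_of_one_lt (α / t) (by norm_num : (1 : ℝ) < 2)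
  refine hdyadic n t ⟨?_, ht.2⟩
  rw [div_lt_iff₀ ht.1] at hn
  rwa [div_lt_iff₀ (by positivity), mul_comm]

theorem exists_forall_norm_sub_le_of_tendstoUniformlyOn {E : Type*} [SeminormedAddCommGroup E]
    {F : ℝ → E → E} {s : Set E} (h : TendstoUniformlyOn F id (𝓝[>] 0) s) {ε : ℝ} (hε : 0 < ε) :
    ∃ α > 0, ∀ t ∈ Ioc 0 α, ∀ x ∈ s, ‖F t x - x‖ ≤ ε := by
  obtain ⟨α, hα, hsub⟩ :=
    mem_nhdsGT_iff_exists_Ioc_subset.1 (Metric.tendstoUniformlyOn_iff.1 h ε hε)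
  exact ⟨α, hα, fun t ht x hx => by simpa [dist_eq_norm'] using (hsub ht x hx).le⟩

theorem norm_sub_le_mul_div_rpow_of_forall_norm_sub_le {A : Type*} [NormedAddCommGroup A]
    [NormedSpace ℂ A] {f : ℝ → A → A} {b' : A} {δ α C p : ℝ} (hα : 0 < α) (hp : 0 ≤ p)
    (hC : 0 ≤ C) (hdiff : ∀ t ∈ Ioc 0 α, DifferentiableOn ℂ (f t) (ball b' δ))
    (hsq : ∀ t ∈ Ioc 0 α, ∀ x ∈ ball b' δ, f (2 * t) x = f t (f t x))
    (hsmall : ∀ t ∈ Ioc 0 α, ∀ x ∈ ball b' δ, ‖f t x - x‖ ≤ δ * (2 - 2 ^ p) / 8)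
    (hbound : ∀ t ∈ Ioc α (2 * α), ∀ x ∈ ball b' δ, ‖f t x - x‖ ≤ C) :
    ∀ t ∈ Ioc 0 α, ∀ x ∈ ball b' (3 * δ / 4), ‖f t x - x‖ ≤ C * (t / α) ^ p := by
  intro t ht x hx
  have hδ : 0 < δ := by linarith [pos_of_mem_ball hx]
  have hsub : ball x (δ / 4) ⊆ ball b' δ := ball_subset_ball' (by linarith [mem_ball.1 hx])
  have hxδ : x ∈ ball b' δ := hsub (mem_ball_self (by positivity))
  refine le_mul_div_rpow_of_two_rpow_mul_le (φ := fun s => ‖f s x - x‖) hα hp hC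
    (fun s hs => hbound s hs x hxδ) (fun s hs => ?_) t ⟨ht.1, by linarith [ht.2]⟩
  have h2p : (0 : ℝ) < 2 ^ p := by positivity
  have hmove : ‖f s x - x‖ < δ / 4 := (hsmall s hs x hxδ).trans_lt (by nlinarith)
  -- on the ball of radius `δ / 4` the doubling factor `2 - 2K / (δ / 4)` is exactly `2 ^ p`
  have := two_sub_mul_norm_sub_le ((hdiff s hs).mono hsub) (fun y hy => hsmall s hs y (hsub hy))
    hmove
  rwa [← hsq s hs x hxδ, show 2 - 2 * (δ * (2 - 2 ^ p) / 8) / (δ / 4) = 2 ^ p by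
    field_simp; ring] at this

theorem exists_forall_norm_sub_le_mul_rpow {A : Type*} [NormedAddCommGroup A] [NormedSpace ℂ A]
    {f : ℝ → A → A} {b' : A} {δ p : ℝ} (hδ : 0 < δ) (hp : 0 ≤ p) (hp1 : p < 1)
    (hdiff : ∀ t > 0, DifferentiableOn ℂ (f t) (ball b' δ))
    (hsq : ∀ t > 0, ∀ x ∈ ball b' δ, f (2 * t) x = f t (f t x))
    (hH1 : TendstoUniformlyOn f id (𝓝[>] 0) (ball b' δ))
    (hH2 : ∀ T > 0, ∃ C, ∀ t ∈ Icc 0 T, ∀ x ∈ ball b' δ, ‖f t x - x‖ ≤ C) :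
    ∃ α > 0, ∃ C > 0, ∀ t ∈ Ioc 0 α, (∀ x ∈ ball b' δ, ‖f t x - x‖ < δ / 4) ∧
      ∀ x ∈ ball b' (3 * δ / 4), ‖f t x - x‖ ≤ C * t ^ p := by
  have h2p₀ : (0 : ℝ) < 2 ^ p := by positivity
  have h2p : (2 : ℝ) ^ p < 2 := by
    simpa using Real.rpow_lt_rpow_of_exponent_lt (by norm_num : (1 : ℝ) < 2) hp1
  obtain ⟨α, hα, hsmall⟩ := exists_forall_norm_sub_le_of_tendstoUniformlyOn hH1
    (ε := δ * (2 - 2 ^ p) / 8) (by nlinarith)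
  obtain ⟨C, hC⟩ := hH2 (2 * α) (by positivity)
  have hrate := norm_sub_le_mul_div_rpow_of_forall_norm_sub_le (C := max C 1) hα hp
    (zero_le_one.trans (le_max_right C 1)) (fun t ht => hdiff t ht.1)
    (fun t ht => hsq t ht.1) hsmall
    (fun t ht x hx => (hC t ⟨by linarith [ht.1], ht.2⟩ x hx).trans (le_max_left _ _))
  refine ⟨α, hα, max C 1 / α ^ p, by positivity, fun t ht =>
    ⟨fun x hx => (hsmall t ht x hx).trans_lt (by nlinarith), fun x hx => ?_⟩⟩
  rw [div_mul_comm, ← Real.div_rpow ht.1.le hα.le, mul_comm]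
  exact hrate t ht x hx

theorem norm_inv_two_mul_smul_sub_sub_inv_smul_sub {E : Type*} [SeminormedAddCommGroup E]
    [NormedSpace ℝ E] {t : ℝ} (ht : 0 ≤ t) (u v b : E) :
    ‖(2 * t)⁻¹ • (u - b) - t⁻¹ • (v - b)‖ = (2 * t)⁻¹ * ‖u - v - v + b‖ := by
  rw [show (2 * t)⁻¹ • (u - b) - t⁻¹ • (v - b) = (2 * t)⁻¹ • (u - v - v + b) by module,
    norm_smul, Real.norm_of_nonneg (by positivity)]

theorem semigroup_difference_quotient_estimates_general
    {A : Type*} [NormedAddCommGroup A] [NormedSpace ℂ A]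
    (Ω : Set A)
    (f : ℝ → A → A)
    (hsemi : ∀ s t : ℝ, 0 ≤ s → 0 ≤ t → ∀ b ∈ Ω, f (s + t) b = f s (f t b))
    (hanal : ∀ t : ℝ, 0 ≤ t → AnalyticOnNhd ℂ (f t) Ω)
    (b' : A) (δ : ℝ) (hδ : 0 < δ) (hball : ball b' δ ⊆ Ω)
    (hH1 : TendstoUniformlyOn (fun t b => f t b) id (𝓝[>] (0:ℝ)) (ball b' δ))
    (hH2 : ∀ T > 0, ∃ C, ∀ t ∈ Icc (0:ℝ) T, ∀ b ∈ ball b' δ, ‖f t b - b‖ ≤ C) :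
    ∃ α > 0, ∃ M > 0, ∀ t : ℝ, 0 < t → t ≤ α → ∀ b ∈ ball b' (δ/2),
      ‖f (2*t) b - f t b - f t b + b‖ ≤ 2 * M * t ^ ((4:ℝ)/3) ∧
      ‖(2*t)⁻¹ • (f (2*t) b - b) - t⁻¹ • (f t b - b)‖ ≤ M * t ^ ((1:ℝ)/3) := by
  have hdiff (t : ℝ) (ht : 0 < t) : DifferentiableOn ℂ (f t) (ball b' δ) :=
    (hanal t ht.le).differentiableOn.mono hball
  have hsq (t : ℝ) (ht : 0 < t) (x : A) (hx : x ∈ ball b' δ) : f (2 * t) x = f t (f t x) := by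
    rw [two_mul]; exact hsemi t t ht.le ht.le x (hball hx)
  obtain ⟨α, hα, C, hC, hbounds⟩ := exists_forall_norm_sub_le_mul_rpow hδ
    (p := 2 / 3) (by norm_num) (by norm_num) hdiff hsq hH1 hH2
  refine ⟨α, hα, 4 * C ^ 2 / δ, by positivity, fun t ht htα b hb => ?_⟩
  obtain ⟨hmove, hrate⟩ := hbounds t ⟨ht, htα⟩
  have hbδ : b ∈ ball b' δ := ball_subset_ball (by linarith) hb
  have hsub : ball b (δ / 4) ⊆ ball b' (3 * δ / 4) :=
    ball_subset_ball' (by linarith [mem_ball.1 hb])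
  have hsecond : ‖f (2 * t) b - f t b - f t b + b‖ ≤ 2 * (4 * C ^ 2 / δ) * t ^ (4 / 3 : ℝ) := calc
    _ = ‖f t (f t b) - f t b - f t b + b‖ := by rw [hsq t ht b hbδ]
    _ ≤ 2 * (C * t ^ (2 / 3 : ℝ)) ^ 2 / (δ / 4) :=
      norm_second_difference_le_sq ((hdiff t ht).mono (hsub.trans (ball_subset_ball (by linarith))))
        (fun x hx => hrate x (hsub hx)) (hmove b hbδ)
    _ = 2 * (4 * C ^ 2 / δ) * t ^ (4 / 3 : ℝ) := by
      rw [mul_pow, ← Real.rpow_mul_natCast ht.le]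
      norm_num
      field_simp
  refine ⟨hsecond, ?_⟩
  calc _ = (2 * t)⁻¹ * ‖f (2 * t) b - f t b - f t b + b‖ :=
        norm_inv_two_mul_smul_sub_sub_inv_smul_sub ht.le _ _ _
    _ ≤ (2 * t)⁻¹ * (2 * (4 * C ^ 2 / δ) * t ^ (4 / 3 : ℝ)) := by gcongr
    _ = 4 * C ^ 2 / δ * t ^ (1 / 3 : ℝ) := by
      rw [show (4 / 3 : ℝ) = 1 + 1 / 3 by norm_num, Real.rpow_add ht, Real.rpow_one]
      field_simp

/-- For a composition semigroup of analytic self-maps of an open set `Ω` in a complex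
Banach space satisfying (H1) and (H2) near `b'` (with parameter `δ`), there are
`α, M > 0` with `‖f_{2t}(b) - 2 f_t(b) + b‖ ≤ 2 M t^{4/3}` and
`‖(f_{2t}(b) - b)/(2t) - (f_t(b) - b)/t‖ ≤ M t^{1/3}` for `t ∈ (0, α]`,
`b ∈ B_{δ/2}(b')`. -/
theorem semigroup_difference_quotient_estimates
    {A : Type*} [NormedAddCommGroup A] [NormedSpace ℂ A] [CompleteSpace A]
    (Ω : Set A) (hΩ : IsOpen Ω)
    (f : ℝ → A → A)
    (hf0 : ∀ b ∈ Ω, f 0 b = b)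
    (hmaps : ∀ t : ℝ, 0 ≤ t → Set.MapsTo (f t) Ω Ω)
    (hsemi : ∀ s t : ℝ, 0 ≤ s → 0 ≤ t → ∀ b ∈ Ω, f (s + t) b = f s (f t b))
    (hanal : ∀ t : ℝ, 0 ≤ t → AnalyticOnNhd ℂ (f t) Ω)
    (b' : A) (hb' : b' ∈ Ω) (δ : ℝ) (hδ : 0 < δ) (hball : ball b' δ ⊆ Ω)
    (hH1 : TendstoUniformlyOn (fun t b => f t b) id (𝓝[>] (0:ℝ)) (ball b' δ))
    (hH2 : ∀ T > 0, ∃ C, ∀ t ∈ Icc (0:ℝ) T, ∀ b ∈ ball b' δ, ‖f t b - b‖ ≤ C) :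
    ∃ α > 0, ∃ M > 0, ∀ t : ℝ, 0 < t → t ≤ α → ∀ b ∈ ball b' (δ/2),
      ‖f (2*t) b - f t b - f t b + b‖ ≤ 2 * M * t ^ ((4:ℝ)/3) ∧
      ‖(2*t)⁻¹ • (f (2*t) b - b) - t⁻¹ • (f t b - b)‖ ≤ M * t ^ ((1:ℝ)/3) :=
  semigroup_difference_quotient_estimates_general Ω f hsemi hanal b' δ hδ hball hH1 hH2
end

section
/- Under hypotheses (H1) and (H2), define Φ : Ω → A by Φ(b) = −lim_{k→∞} 2^k (f_{2^{−k}}(b) − b) (this limit exists). Then for every b ∈ Ω and t ≥ 0, the map s ↦ Φ(f_s(b)) is integrable on [0, t] and f_t(b) = b − ∫_0^t Φ(f_s(b)) ds. -/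
/-!
By the Cauchy estimates, a holomorphic map that moves the points of a ball by at most `ε` differs
from the identity by a map that is `O(ε)`-Lipschitz on a smaller ball. With `f_t → id` uniformly
near `b'`, the semigroup law makes the displacement `t ↦ f_t b - b` additive up to a small
relative error, `f_{x+y} b - b ≈ (f_x b - b) + (f_y b - b)`. Iterating compares the quotient
`h⁻¹ (f_h b - b)` with `(n h)⁻¹ (f_{nh} b - b)` at a fixed macroscopic time `n h`: this first
gives a linear bound `‖f_h b - b‖ ≤ M h`, and then shows that the quotients are uniformly Cauchy
as `h → 0⁺`. Their locally uniform limit, the generator `-Φ`, is continuous and, by the semigroup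
law, is the right derivative of `t ↦ f_t b` along the orbit. Continuity of the orbit from the left
uses (H2) and the same Lipschitz estimate, and the fundamental theorem of calculus for right
derivatives gives the integral equation.
-/

open Filter Metric Set Topology MeasureTheory intervalIntegral

theorem norm_sub_le_of_differentiableOn_ball_of_norm_le
    {E F : Type*} [NormedAddCommGroup E] [NormedSpace ℂ E] [NormedAddCommGroup F]
    [NormedSpace ℂ F] {g : E → F} {c : E} {r C : ℝ} (hg : DifferentiableOn ℂ g (ball c r))
    (hC : ∀ x ∈ ball c r, ‖g x‖ ≤ C) {u v : E} (hu : u ∈ ball c (r / 3))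
    (hv : v ∈ ball c (r / 3)) :
    ‖g u - g v‖ ≤ 3 * C / r * ‖u - v‖ := by
  have hr : 0 < r := by linarith [pos_of_mem_ball hu]
  have hsub : ∀ w ∈ ball c (r / 3), ball w (2 * r / 3) ⊆ ball c r := fun w hw =>
    ball_subset_ball' (by linarith [mem_ball.1 hw])
  have hderiv : ∀ w ∈ ball c (r / 3), ‖fderiv ℂ g w‖ ≤ 3 * C / r := fun w hw => by
    have hmaps : MapsTo g (ball w (2 * r / 3)) (closedBall (g w) (2 * C)) := fun x hx => by
      rw [mem_closedBall, dist_eq_norm]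
      linarith [norm_sub_le (g x) (g w), hC x (hsub w hw hx),
        hC w (hsub w hw (mem_ball_self (by positivity)))]
    convert Complex.norm_fderiv_le_div_of_mapsTo_ball (hg.mono (hsub w hw)) hmaps
      (by positivity) using 1
    field_simp
  exact (convex_ball c (r / 3)).norm_image_sub_le_of_norm_fderiv_le
    (fun w hw => hg.differentiableAt
      (isOpen_ball.mem_nhds (hsub w hw (mem_ball_self (by positivity))))) hderiv hv hu

theorem UniformCauchySeqOn.tendstoUniformlyOn_limUnder {ι α β : Type*} [UniformSpace β]
    [CompleteSpace β] [Nonempty β] {F : ι → α → β} {p : Filter ι} [p.NeBot] {s : Set α}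
    (hF : UniformCauchySeqOn F p s) : TendstoUniformlyOn F (fun x => limUnder p (F · x)) p s :=
  hF.tendstoUniformlyOn_of_tendsto fun _ hx =>
    tendsto_nhds_limUnder (cauchy_map_iff_exists_tendsto.1 (hF.cauchy_map hx))

theorem exists_nat_mul_mem_Ioc {h τ : ℝ} (hh : 0 < h) (hτ : 0 ≤ τ) :
    ∃ n : ℕ, (n : ℝ) * h ∈ Ioc (τ - h) τ := by
  refine ⟨⌊τ / h⌋₊, ?_, ?_⟩
  · have := Nat.lt_floor_add_one (τ / h)
    rw [div_lt_iff₀ hh] at this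
    linarith
  · exact (le_div_iff₀ hh).1 (Nat.floor_le (div_nonneg hτ hh.le))

section

variable {A : Type*} [NormedAddCommGroup A] {f : ℝ → A → A} {U V : Set A} {b c : A}
  {δ ε τ h x y W M : ℝ}

def DisplacementLE (f : ℝ → A → A) (U : Set A) (τ ε : ℝ) : Prop :=
  ∀ t ∈ Icc 0 τ, ∀ u ∈ U, ‖f t u - u‖ ≤ ε

theorem DisplacementLE.mono (hf : DisplacementLE f U τ ε) {τ' : ℝ} (hτ : τ' ≤ τ) :
    DisplacementLE f U τ' ε := fun t ht => hf t ⟨ht.1, ht.2.trans hτ⟩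

theorem DisplacementLE.apply_mem_ball (hf : DisplacementLE f (ball c δ) τ ε) (hε : ε ≤ δ / 6)
    (hb : b ∈ ball c (δ / 6)) {t : ℝ} (ht : t ∈ Icc 0 τ) : f t b ∈ ball c (δ / 3) := by
  have hδ : 0 < δ := by linarith [pos_of_mem_ball hb]
  have := hf t ht b (ball_subset_ball (by linarith) hb)
  rw [mem_ball, dist_eq_norm] at hb ⊢
  linarith [norm_sub_le_norm_sub_add_norm_sub (f t b) b c]

theorem DisplacementLE.nonneg (hf : DisplacementLE f U τ ε) (hτ : 0 ≤ τ) (hb : b ∈ U) :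
    0 ≤ ε :=
  (norm_nonneg _).trans (hf 0 ⟨le_rfl, hτ⟩ b hb)

theorem exists_displacementLE (hf0 : ∀ b ∈ U, f 0 b = b)
    (hU : TendstoUniformlyOn f id (𝓝[>] 0) U) (hε : 0 < ε) :
    ∃ τ > 0, DisplacementLE f U τ ε := by
  obtain ⟨u, hu, hsub⟩ :=
    mem_nhdsGT_iff_exists_Ioo_subset.1 (Metric.tendstoUniformlyOn_iff.1 hU ε hε)
  refine ⟨u / 2, half_pos hu, fun t ht b hb => ?_⟩
  rcases ht.1.eq_or_lt with rfl | ht0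
  · simp [hf0 b hb, hε.le]
  · rw [← dist_eq_norm, dist_comm]
    exact (hsub ⟨ht0, by linarith [ht.2, mem_Ioi.1 hu]⟩ b hb).le

variable [NormedSpace ℂ A]

structure IsHolomorphicSemigroupOn (f : ℝ → A → A) (U : Set A) : Prop where
  map_zero : ∀ b ∈ U, f 0 b = b
  map_add : ∀ s t : ℝ, 0 ≤ s → 0 ≤ t → ∀ b ∈ U, f (s + t) b = f s (f t b)
  differentiableOn : ∀ t : ℝ, 0 ≤ t → DifferentiableOn ℂ (f t) U

noncomputable def diffQuotient (f : ℝ → A → A) (h : ℝ) (b : A) : A := h⁻¹ • (f h b - b)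

noncomputable def generator (f : ℝ → A → A) (b : A) : A :=
  limUnder (𝓝[>] 0) fun h => diffQuotient f h b

theorem IsHolomorphicSemigroupOn.mono (hf : IsHolomorphicSemigroupOn f U) (hVU : V ⊆ U) :
    IsHolomorphicSemigroupOn f V where
  map_zero b hb := hf.map_zero b (hVU hb)
  map_add s t hs ht b hb := hf.map_add s t hs ht b (hVU hb)
  differentiableOn t ht := (hf.differentiableOn t ht).mono hVU

theorem IsHolomorphicSemigroupOn.norm_displacement_add_sub_le
    (hf : IsHolomorphicSemigroupOn f (ball c δ)) (hx : 0 ≤ x) (hy : 0 ≤ y)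
    (hW : ∀ u ∈ ball c δ, ‖f x u - u‖ ≤ W) (hb : b ∈ ball c (δ / 3))
    (hyb : f y b ∈ ball c (δ / 3)) :
    ‖f (x + y) b - b - ((f x b - b) + (f y b - b))‖ ≤ 3 * W / δ * ‖f y b - b‖ := by
  have hδ : 0 < δ := by linarith [pos_of_mem_ball hb]
  rw [hf.map_add x y hx hy b (ball_subset_ball (by linarith) hb)]
  convert norm_sub_le_of_differentiableOn_ball_of_norm_le
    ((hf.differentiableOn x hx).sub differentiableOn_id) hW hyb hb using 2
  simp only [Pi.sub_apply, id]
  abel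

theorem IsHolomorphicSemigroupOn.norm_displacement_nat_mul_sub_le
    (hf : IsHolomorphicSemigroupOn f (ball c δ)) (hε : ε ≤ δ / 6) {n : ℕ}
    (hsmall : DisplacementLE f (ball c δ) (n * h) ε) (hb : b ∈ ball c (δ / 6)) (hh : 0 ≤ h) :
    ‖f (n * h) b - b - (n : ℝ) • (f h b - b)‖ ≤ n * (3 * ε / δ) * ‖f h b - b‖ := by
  have hδ : 0 < δ := by linarith [pos_of_mem_ball hb]
  induction n with
  | zero => simp [hf.map_zero b (ball_subset_ball (by linarith) hb)]
  | succ n ih =>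
    have hnh : (n : ℝ) * h ≤ (n + 1 : ℕ) * h := by gcongr; simp
    have hstep := hf.norm_displacement_add_sub_le (by positivity) hh
      (hsmall _ ⟨by positivity, hnh⟩) (ball_subset_ball (by linarith) hb)
      (hsmall.apply_mem_ball hε hb ⟨hh, le_mul_of_one_le_left hh (by simp)⟩)
    have hsplit : f ((n + 1 : ℕ) * h) b - b - ((n + 1 : ℕ) : ℝ) • (f h b - b) =
        (f (n * h + h) b - b - ((f (n * h) b - b) + (f h b - b))) +
          (f (n * h) b - b - (n : ℝ) • (f h b - b)) := by
      push_cast; rw [add_mul, one_mul, add_smul, one_smul]; abel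
    rw [hsplit]
    refine (norm_add_le _ _).trans ?_
    have := ih (hsmall.mono hnh)
    push_cast
    linarith

theorem IsHolomorphicSemigroupOn.norm_displacement_le
    (hf : IsHolomorphicSemigroupOn f (ball c δ)) (hε : ε ≤ δ / 6)
    (hsmall : DisplacementLE f (ball c δ) τ ε) (hb : b ∈ ball c (δ / 6)) (hh : h ∈ Icc 0 (τ / 2)) :
    ‖f h b - b‖ ≤ 4 * ε / τ * h := by
  have hδ : 0 < δ := by linarith [pos_of_mem_ball hb]
  rcases hh.1.eq_or_lt with rfl | hh0
  · simp [hf.map_zero b (ball_subset_ball (by linarith) hb)]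
  have hτ : 0 < τ := by linarith [hh.2]
  obtain ⟨n, hnτ⟩ := exists_nat_mul_mem_Ioc hh0 hτ.le
  have hiter := hf.norm_displacement_nat_mul_sub_le hε (hsmall.mono hnτ.2) hb hh0.le
  have hnh := hsmall _ ⟨by positivity, hnτ.2⟩ b (ball_subset_ball (by linarith) hb)
  have hcoef : 3 * ε / δ ≤ 1 / 2 := by rw [div_le_iff₀ hδ]; linarith
  have hn : (n : ℝ) * ‖f h b - b‖ ≤ ε + n * (1 / 2) * ‖f h b - b‖ := by
    have := norm_sub_norm_le ((n : ℝ) • (f h b - b)) (f (n * h) b - b)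
    rw [norm_smul, Real.norm_natCast, norm_sub_rev ((n : ℝ) • _)] at this
    have : (n : ℝ) * (3 * ε / δ) * ‖f h b - b‖ ≤ n * (1 / 2) * ‖f h b - b‖ := by gcongr
    linarith
  have hτn : τ ≤ 2 * (n * h) := by linarith [hnτ.1, hh.2]
  rw [div_mul_eq_mul_div, le_div_iff₀ hτ]
  calc ‖f h b - b‖ * τ ≤ ‖f h b - b‖ * (2 * (n * h)) := by gcongr
    _ = 2 * h * (n * ‖f h b - b‖) := by ring
    _ ≤ 2 * h * (2 * ε) := mul_le_mul_of_nonneg_left (by linarith) (by positivity)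
    _ = 4 * ε * h := by ring

theorem IsHolomorphicSemigroupOn.norm_diffQuotient_sub_nat_mul_le
    (hf : IsHolomorphicSemigroupOn f (ball c δ)) (hε : ε ≤ δ / 6) {n : ℕ} (hn : 0 < n)
    (hsmall : DisplacementLE f (ball c δ) (n * h) ε) (hb : b ∈ ball c (δ / 6)) (hh : 0 < h)
    (hM : ‖f h b - b‖ ≤ M * h) :
    ‖diffQuotient f h b - diffQuotient f (n * h) b‖ ≤ 3 * ε / δ * M := by
  have hδ : 0 < δ := by linarith [pos_of_mem_ball hb]
  have hn' : (0 : ℝ) < n := Nat.cast_pos.2 hn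
  have hε0 := hsmall.nonneg (by positivity) (ball_subset_ball (by linarith) hb)
  have hsplit : diffQuotient f h b - diffQuotient f (n * h) b =
      ((n : ℝ) * h)⁻¹ • ((n : ℝ) • (f h b - b) - (f (n * h) b - b)) := by
    simp only [diffQuotient, smul_sub, smul_smul]
    field_simp
  rw [hsplit, norm_smul, norm_sub_rev, norm_inv, Real.norm_of_nonneg (by positivity),
    inv_mul_le_iff₀ (by positivity)]
  calc _ ≤ (n : ℝ) * (3 * ε / δ) * ‖f h b - b‖ :=
        hf.norm_displacement_nat_mul_sub_le hε hsmall hb hh.le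
    _ ≤ (n : ℝ) * (3 * ε / δ) * (M * h) := by gcongr
    _ = _ := by ring

theorem IsHolomorphicSemigroupOn.norm_diffQuotient_sub_le
    (hf : IsHolomorphicSemigroupOn f (ball c δ)) (hε : ε ≤ δ / 6) (hτ : 0 < τ)
    (hsmall : DisplacementLE f (ball c δ) τ ε) (hb : b ∈ ball c (δ / 6))
    (hM : ∀ s ∈ Icc 0 τ, ‖f s b - b‖ ≤ M * s) {p q : ℝ} (hp : τ / 2 ≤ p) (hpq : p ≤ q)
    (hq : q ≤ τ) :
    ‖diffQuotient f p b - diffQuotient f q b‖ ≤ 4 * M * (q - p) / τ + 3 * ε / δ * M := by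
  have hδ : 0 < δ := by linarith [pos_of_mem_ball hb]
  have hp0 : 0 < p := by linarith
  have hq0 : 0 < q := hp0.trans_le hpq
  have hM0 : 0 ≤ M := by nlinarith [hM τ ⟨hτ.le, le_rfl⟩, norm_nonneg (f τ b - b)]
  have hε0 := hsmall.nonneg hτ.le (ball_subset_ball (by linarith) hb)
  have hadd := hf.norm_displacement_add_sub_le (sub_nonneg.2 hpq) hp0.le
    (hsmall (q - p) ⟨sub_nonneg.2 hpq, by linarith⟩) (ball_subset_ball (by linarith) hb)
    (hsmall.apply_mem_ball hε hb ⟨hp0.le, hpq.trans hq⟩)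
  rw [sub_add_cancel] at hadd
  have hqp : ‖f p b - b - (f q b - b)‖ ≤ M * (q - p) + 3 * ε / δ * (M * p) := by
    rw [norm_sub_rev, show f q b - b - (f p b - b) = (f (q - p) b - b) +
      (f q b - b - ((f (q - p) b - b) + (f p b - b))) by abel]
    refine (norm_add_le _ _).trans (add_le_add (hM _ ⟨sub_nonneg.2 hpq, by linarith⟩)
      (hadd.trans ?_))
    gcongr
    exact hM p ⟨hp0.le, hpq.trans hq⟩
  have hinv : 0 ≤ p⁻¹ - q⁻¹ := sub_nonneg.2 (inv_anti₀ hp0 hpq)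
  have hsplit : diffQuotient f p b - diffQuotient f q b =
      p⁻¹ • (f p b - b - (f q b - b)) + (p⁻¹ - q⁻¹) • (f q b - b) := by
    simp only [diffQuotient]; module
  rw [hsplit]
  calc _ ≤ ‖p⁻¹ • (f p b - b - (f q b - b))‖ + ‖(p⁻¹ - q⁻¹) • (f q b - b)‖ := norm_add_le _ _
    _ ≤ p⁻¹ * (M * (q - p) + 3 * ε / δ * (M * p)) + (p⁻¹ - q⁻¹) * (M * q) := by
      rw [norm_smul, norm_smul, Real.norm_of_nonneg (inv_nonneg.2 hp0.le),
        Real.norm_of_nonneg hinv]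
      gcongr
      exact hM q ⟨hq0.le, hq⟩
    _ = 2 * M * (q - p) / p + 3 * ε / δ * M := by field_simp; ring
    _ ≤ 4 * M * (q - p) / τ + 3 * ε / δ * M := by
      gcongr 1
      rw [div_le_div_iff₀ hp0 hτ]
      nlinarith [mul_nonneg hM0 (sub_nonneg.2 hpq)]

theorem IsHolomorphicSemigroupOn.norm_diffQuotient_sub_diffQuotient_le
    (hf : IsHolomorphicSemigroupOn f (ball c δ)) (hε : ε ≤ δ / 6) (hτ : 0 < τ)
    (hsmall : DisplacementLE f (ball c δ) τ ε) (hb : b ∈ ball c (δ / 6))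
    (hM : ∀ s ∈ Icc 0 τ, ‖f s b - b‖ ≤ M * s) {h h' : ℝ}
    (hh : h ∈ Ioc 0 (min (τ / 2) (ε * τ))) (hh' : h' ∈ Ioc 0 (min (τ / 2) (ε * τ))) :
    ‖diffQuotient f h b - diffQuotient f h' b‖ ≤ (9 / δ + 4) * M * ε := by
  have hδ : 0 < δ := by linarith [pos_of_mem_ball hb]
  have hM0 : 0 ≤ M := by nlinarith [hM τ ⟨hτ.le, le_rfl⟩, norm_nonneg (f τ b - b)]
  have near : ∀ h ∈ Ioc 0 (min (τ / 2) (ε * τ)), ∃ a ∈ Icc (τ - ε * τ) τ, τ / 2 ≤ a ∧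
      ‖diffQuotient f h b - diffQuotient f a b‖ ≤ 3 * ε / δ * M := by
    intro h hh
    have hhτ := hh.2.trans (min_le_left _ _)
    obtain ⟨n, hn⟩ := exists_nat_mul_mem_Ioc hh.1 hτ.le
    have hn0 : 0 < n := by
      rcases Nat.eq_zero_or_pos n with rfl | hn0
      · simp only [CharP.cast_eq_zero, zero_mul, mem_Ioc] at hn; linarith [hn.1]
      · exact hn0
    refine ⟨n * h, ⟨by linarith [hn.1, hh.2.trans (min_le_right _ _)], hn.2⟩,
      by linarith [hn.1], hf.norm_diffQuotient_sub_nat_mul_le hε hn0 (hsmall.mono hn.2) hb hh.1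
        (hM h ⟨hh.1.le, by linarith⟩)⟩
  have mid : ∀ p ∈ Icc (τ - ε * τ) τ, ∀ q ∈ Icc (τ - ε * τ) τ, τ / 2 ≤ p → p ≤ q →
      ‖diffQuotient f p b - diffQuotient f q b‖ ≤ 4 * M * ε + 3 * ε / δ * M := by
    intro p hp q hq hp2 hpq
    calc _ ≤ 4 * M * (q - p) / τ + 3 * ε / δ * M :=
          hf.norm_diffQuotient_sub_le hε hτ hsmall hb hM hp2 hpq hq.2
      _ ≤ 4 * M * (ε * τ) / τ + 3 * ε / δ * M := by gcongr; linarith [hp.1, hq.2]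
      _ = 4 * M * ε + 3 * ε / δ * M := by field_simp
  obtain ⟨a, ha, ha2, hna⟩ := near h hh
  obtain ⟨a', ha', ha2', hna'⟩ := near h' hh'
  have haa' : ‖diffQuotient f a b - diffQuotient f a' b‖ ≤ 4 * M * ε + 3 * ε / δ * M := by
    rcases le_total a a' with haa | haa
    · exact mid a ha a' ha' ha2 haa
    · rw [norm_sub_rev]; exact mid a' ha' a ha ha2' haa
  rw [norm_sub_rev (diffQuotient f h' b)] at hna'
  calc _ ≤ ‖diffQuotient f h b - diffQuotient f a b‖ +
        (‖diffQuotient f a b - diffQuotient f a' b‖ +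
          ‖diffQuotient f a' b - diffQuotient f h' b‖) :=
        (norm_sub_le_norm_sub_add_norm_sub _ _ _).trans
          (add_le_add_right (norm_sub_le_norm_sub_add_norm_sub _ _ _) _)
    _ ≤ 3 * ε / δ * M + ((4 * M * ε + 3 * ε / δ * M) + 3 * ε / δ * M) := by gcongr
    _ = (9 / δ + 4) * M * ε := by ring

theorem IsHolomorphicSemigroupOn.uniformCauchySeqOn_diffQuotient
    (hf : IsHolomorphicSemigroupOn f (ball c δ)) (hU : TendstoUniformlyOn f id (𝓝[>] 0) (ball c δ))
    (hδ : 0 < δ) : UniformCauchySeqOn (diffQuotient f) (𝓝[>] 0) (ball c (δ / 6)) := by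
  obtain ⟨τ₀, hτ₀, hsmall₀⟩ := exists_displacementLE hf.map_zero hU (ε := δ / 6) (by positivity)
  set M := 4 * (δ / 6) / τ₀
  have hM : ∀ b ∈ ball c (δ / 6), ∀ s ∈ Icc 0 (τ₀ / 2), ‖f s b - b‖ ≤ M * s :=
    fun b hb s hs => hf.norm_displacement_le le_rfl hsmall₀ hb hs
  intro u hu
  obtain ⟨ε', hε', hε'u⟩ := mem_uniformity_dist.1 hu
  set K := (9 / δ + 4) * M
  have hK : 0 < K := by positivity
  set ε := min (δ / 6) (ε' / (2 * K))
  have hε : 0 < ε := lt_min (by positivity) (by positivity)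
  have hKε : K * ε < ε' := calc
    K * ε ≤ K * (ε' / (2 * K)) := mul_le_mul_of_nonneg_left (min_le_right _ _) hK.le
    _ = ε' / 2 := by field_simp
    _ < ε' := half_lt_self hε'
  obtain ⟨τ₁, hτ₁, hsmall₁⟩ := exists_displacementLE hf.map_zero hU hε
  set τ := min τ₁ (τ₀ / 2)
  have hτ : 0 < τ := lt_min hτ₁ (by positivity)
  have hρ : 0 < min (τ / 2) (ε * τ) := lt_min (by positivity) (by positivity)
  filter_upwards [prod_mem_prod (Ioc_mem_nhdsGT hρ) (Ioc_mem_nhdsGT hρ)] with p hp b hb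
  apply hε'u
  rw [dist_eq_norm]
  exact (hf.norm_diffQuotient_sub_diffQuotient_le (min_le_left _ _) hτ
    (hsmall₁.mono (min_le_left _ _)) hb
    (fun s hs => hM b hb s ⟨hs.1, hs.2.trans (min_le_right _ _)⟩) hp.1 hp.2).trans_lt hKε

theorem IsHolomorphicSemigroupOn.tendstoLocallyUniformlyOn_diffQuotient [CompleteSpace A]
    (hf : IsHolomorphicSemigroupOn f U)
    (hU : ∀ c ∈ U, ∃ δ > 0, ball c δ ⊆ U ∧ TendstoUniformlyOn f id (𝓝[>] 0) (ball c δ)) :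
    TendstoLocallyUniformlyOn (diffQuotient f) (generator f) (𝓝[>] 0) U :=
  tendstoLocallyUniformlyOn_of_forall_exists_nhds fun c hc => by
    obtain ⟨δ, hδ, hsub, hconv⟩ := hU c hc
    exact ⟨ball c (δ / 6), mem_nhdsWithin_of_mem_nhds (ball_mem_nhds c (by positivity)),
      ((hf.mono hsub).uniformCauchySeqOn_diffQuotient hconv hδ).tendstoUniformlyOn_limUnder⟩

theorem IsHolomorphicSemigroupOn.continuousOn_generator (hf : IsHolomorphicSemigroupOn f U)
    (hconv : TendstoLocallyUniformlyOn (diffQuotient f) (generator f) (𝓝[>] 0) U) :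
    ContinuousOn (generator f) U :=
  hconv.continuousOn <| Eventually.frequently <| eventually_mem_nhdsWithin.mono fun h hh =>
    ((hf.differentiableOn h (le_of_lt hh)).continuousOn.sub continuousOn_id).const_smul h⁻¹

theorem hasDerivWithinAt_Ioi_of_tendsto_diffQuotient {v : A} {s : ℝ}
    (hs : ∀ t > s, f t b = f (t - s) (f s b))
    (hv : Tendsto (fun h => diffQuotient f h (f s b)) (𝓝[>] 0) (𝓝 v)) :
    HasDerivWithinAt (fun t => f t b) v (Ioi s) s := by
  have hshift : Tendsto (· - s) (𝓝[>] s) (𝓝[>] 0) := by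
    rw [← sub_self s]
    exact map_subRight_nhdsGT.le
  rw [hasDerivWithinAt_iff_tendsto_slope, sdiff_singleton_eq_self self_notMem_Ioi]
  refine (hv.comp hshift).congr' (eventually_mem_nhdsWithin.mono fun t ht => ?_)
  simp [diffQuotient, slope_def_module, hs t ht]

theorem IsHolomorphicSemigroupOn.continuousWithinAt_Icc (hf : IsHolomorphicSemigroupOn f (ball b δ))
    (hδ : 0 < δ) {s C : ℝ} (hC : DisplacementLE f (ball b δ) s C)
    (h0 : ContinuousWithinAt (fun t => f t b) (Ici 0) 0) :
    ContinuousWithinAt (fun t => f t b) (Icc 0 s) s := by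
  have hback : Tendsto (fun y => f (s - y) b) (𝓝[Icc 0 s] s) (𝓝 b) := by
    rw [ContinuousWithinAt, hf.map_zero b (mem_ball_self hδ)] at h0
    refine h0.comp (tendsto_nhdsWithin_iff.2 ⟨?_, eventually_mem_nhdsWithin.mono
      fun y hy => sub_nonneg.2 hy.2⟩)
    have : Tendsto (fun y => s - y) (𝓝 s) (𝓝 (s - s)) := tendsto_const_nhds.sub tendsto_id
    rw [sub_self] at this
    exact this.mono_left nhdsWithin_le_nhds
  have hbound : ∀ᶠ y in 𝓝[Icc 0 s] s,
      ‖f y b - f s b‖ ≤ (3 * C / δ + 1) * ‖f (s - y) b - b‖ := by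
    filter_upwards [eventually_mem_nhdsWithin, hback (ball_mem_nhds b (by positivity : 0 < δ / 3))]
      with y hy hyb
    have hadd := hf.norm_displacement_add_sub_le hy.1 (sub_nonneg.2 hy.2) (hC y hy)
      (mem_ball_self (by positivity)) hyb
    rw [add_sub_cancel] at hadd
    rw [norm_sub_rev, show f s b - f y b = (f s b - b - ((f y b - b) + (f (s - y) b - b))) +
      (f (s - y) b - b) by abel]
    refine (norm_add_le _ _).trans ?_
    linarith
  rw [ContinuousWithinAt, tendsto_iff_norm_sub_tendsto_zero]
  refine squeeze_zero' (Eventually.of_forall fun _ => norm_nonneg _) hbound ?_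
  simpa using ((tendsto_iff_norm_sub_tendsto_zero.1 hback).const_mul (3 * C / δ + 1))

end

theorem semigroup_integral_equation_general
    {A : Type*} [NormedAddCommGroup A] [NormedSpace ℂ A] [CompleteSpace A]
    (Ω : Set A)
    (f : ℝ → A → A)
    (hf0 : ∀ b ∈ Ω, f 0 b = b)
    (hmaps : ∀ t : ℝ, 0 ≤ t → Set.MapsTo (f t) Ω Ω)
    (hsemi : ∀ s t : ℝ, 0 ≤ s → 0 ≤ t → ∀ b ∈ Ω, f (s + t) b = f s (f t b))
    (hanal : ∀ t : ℝ, 0 ≤ t → AnalyticOnNhd ℂ (f t) Ω)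
    (hloc : ∀ b' ∈ Ω, ∃ δ > 0, ball b' δ ⊆ Ω ∧
      TendstoUniformlyOn (fun t b => f t b) id (𝓝[>] (0:ℝ)) (ball b' δ) ∧
      ∀ T > 0, ∃ C, ∀ t ∈ Icc (0:ℝ) T, ∀ b ∈ ball b' δ, ‖f t b - b‖ ≤ C) :
    ∃ Φ : A → A,
      (∀ b ∈ Ω, Tendsto (fun k : ℕ => (2:ℝ)^k • (f ((1/2:ℝ)^k) b - b))
        atTop (𝓝 (-(Φ b)))) ∧
      ∀ b ∈ Ω, ∀ t : ℝ, 0 ≤ t →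
        IntervalIntegrable (fun s => Φ (f s b)) volume 0 t ∧
        f t b = b - ∫ s in (0:ℝ)..t, Φ (f s b) := by
  have hf : IsHolomorphicSemigroupOn f Ω :=
    ⟨hf0, hsemi, fun t ht => (hanal t ht).differentiableOn⟩
  have hconv : TendstoLocallyUniformlyOn (diffQuotient f) (generator f) (𝓝[>] 0) Ω :=
    hf.tendstoLocallyUniformlyOn_diffQuotient fun c hc =>
      (hloc c hc).imp fun _ ⟨hδ, hsub, hU, _⟩ => ⟨hδ, hsub, hU⟩
  refine ⟨fun b => -generator f b, fun b hb => ?_, fun b hb t ht => ?_⟩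
  · have hdyadic : Tendsto (fun k : ℕ => (1 / 2 : ℝ) ^ k) atTop (𝓝[>] 0) :=
      tendsto_nhdsWithin_iff.2 ⟨tendsto_pow_atTop_nhds_zero_of_lt_one (by norm_num) (by norm_num),
        Eventually.of_forall fun _ => mem_Ioi.2 (by positivity)⟩
    simpa [Function.comp_def, diffQuotient] using (hconv.tendsto_at hb).comp hdyadic
  have hderiv : ∀ s ≥ 0, HasDerivWithinAt (fun s => f s b) (generator f (f s b)) (Ioi s) s :=
    fun s hs => hasDerivWithinAt_Ioi_of_tendsto_diffQuotient
      (fun r hr => by rw [← hsemi _ _ (sub_nonneg.2 hr.le) hs b hb, sub_add_cancel])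
      (hconv.tendsto_at (hmaps s hs hb))
  have hcont : ContinuousOn (fun s => f s b) (Icc 0 t) := by
    obtain ⟨δ, hδ, hsub, -, hbound⟩ := hloc b hb
    obtain ⟨C, hC⟩ := hbound (t + 1) (by linarith)
    intro s hs
    have hleft := (hf.mono hsub).continuousWithinAt_Icc hδ (C := C) (s := s)
      (fun y hy u hu => hC y ⟨hy.1, by linarith [hy.2, hs.2]⟩ u hu)
      (continuousWithinAt_Ioi_iff_Ici.1 (hderiv 0 le_rfl).continuousWithinAt)
    have hright := continuousWithinAt_Ioi_iff_Ici.1 (hderiv s hs.1).continuousWithinAt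
    exact (hleft.union hright).mono fun y hy => (le_total y s).imp (fun h => ⟨hy.1, h⟩) id
  have hint : IntervalIntegrable (fun s => generator f (f s b)) volume 0 t :=
    ((hf.continuousOn_generator hconv).comp hcont fun s hs => hmaps s hs.1 hb)
      |>.intervalIntegrable_of_Icc ht
  refine ⟨hint.neg, ?_⟩
  rw [intervalIntegral.integral_neg, integral_eq_sub_of_hasDeriv_right_of_le ht hcont
    (fun s hs => hderiv s hs.1.le) hint, hf0 b hb]
  abel

/-- For a composition semigroup of analytic self-maps of an open set `Ω` in a complex
Banach space satisfying (H1) and (H2) locally at every point, the limit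
`-Φ(b) = lim_k 2^k (f_{2^{-k}}(b) - b)` exists for each `b ∈ Ω`, the map
`s ↦ Φ(f_s(b))` is integrable on `[0, t]`, and `f_t(b) = b - ∫_0^t Φ(f_s(b)) ds`. -/
theorem semigroup_integral_equation
    {A : Type*} [NormedAddCommGroup A] [NormedSpace ℂ A] [CompleteSpace A]
    (Ω : Set A) (hΩ : IsOpen Ω)
    (f : ℝ → A → A)
    (hf0 : ∀ b ∈ Ω, f 0 b = b)
    (hmaps : ∀ t : ℝ, 0 ≤ t → Set.MapsTo (f t) Ω Ω)
    (hsemi : ∀ s t : ℝ, 0 ≤ s → 0 ≤ t → ∀ b ∈ Ω, f (s + t) b = f s (f t b))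
    (hanal : ∀ t : ℝ, 0 ≤ t → AnalyticOnNhd ℂ (f t) Ω)
    (hloc : ∀ b' ∈ Ω, ∃ δ > 0, ball b' δ ⊆ Ω ∧
      TendstoUniformlyOn (fun t b => f t b) id (𝓝[>] (0:ℝ)) (ball b' δ) ∧
      ∀ T > 0, ∃ C, ∀ t ∈ Icc (0:ℝ) T, ∀ b ∈ ball b' δ, ‖f t b - b‖ ≤ C) :
    ∃ Φ : A → A,
      (∀ b ∈ Ω, Tendsto (fun k : ℕ => (2:ℝ)^k • (f ((1/2:ℝ)^k) b - b))
        atTop (𝓝 (-(Φ b)))) ∧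
      ∀ b ∈ Ω, ∀ t : ℝ, 0 ≤ t →
        IntervalIntegrable (fun s => Φ (f s b)) volume 0 t ∧
        f t b = b - ∫ s in (0:ℝ)..t, Φ (f s b) :=
  semigroup_integral_equation_general Ω f hf0 hmaps hsemi hanal hloc
end

section
/- Under hypothesis (H1) holding at every point of Ω, if for some b ∈ Ω there exists a sequence t_n ↓ 0 with t_n > 0 and f_{t_n}(b) = b for all n, then f_t(b) = b for every t ≥ 0. -/
open Filter Metric Set Topology

/-!
If `f_s(b) = b` then `b` is fixed by every `f_{ks}`, so for any `t ≥ 0` the semigroup law gives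
`f_t(b) = f_r(b)` with `r = t - ⌊t/s⌋ s ∈ [0, s)`. Taking `s = t_n`, the remainders tend to `0`
from the right, and right-continuity of `r ↦ f_r(b)` at `0` (a consequence of (H1)) forces
`f_t(b) = b`.
-/

section FixedPoint

variable {X : Type*} {f : ℝ → X → X} {b : X}

theorem apply_natCast_mul_eq_self (hf0 : f 0 b = b)
    (hsemi : ∀ s t : ℝ, 0 ≤ s → 0 ≤ t → f (s + t) b = f s (f t b))
    {s : ℝ} (hs : 0 ≤ s) (hfix : f s b = b) (k : ℕ) : f (k * s) b = b := by
  induction k with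
  | zero => simpa using hf0
  | succ k ih =>
    rw [Nat.cast_succ, add_one_mul, hsemi _ _ (by positivity) hs, hfix, ih]

theorem exists_mem_Ico_apply_eq_apply (hf0 : f 0 b = b)
    (hsemi : ∀ s t : ℝ, 0 ≤ s → 0 ≤ t → f (s + t) b = f s (f t b))
    {s : ℝ} (hs : 0 < s) (hfix : f s b = b) {t : ℝ} (ht : 0 ≤ t) :
    ∃ r ∈ Ico 0 s, f t b = f r b := by
  set k := ⌊t / s⌋₊
  have hks : (k : ℝ) * s ≤ t := (le_div_iff₀ hs).mp (Nat.floor_le (by positivity))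
  have htk : t < (k + 1) * s := (div_lt_iff₀ hs).mp (Nat.lt_floor_add_one _)
  refine ⟨t - k * s, ⟨by linarith, by linarith⟩, ?_⟩
  calc f t b = f (t - k * s + k * s) b := by rw [sub_add_cancel]
    _ = f (t - k * s) b := by
      rw [hsemi _ _ (by linarith) (by positivity), apply_natCast_mul_eq_self hf0 hsemi hs.le hfix]

theorem apply_eq_self_of_tendsto_nhdsGT [TopologicalSpace X] [T1Space X] (hf0 : f 0 b = b)
    (hsemi : ∀ s t : ℝ, 0 ≤ s → 0 ≤ t → f (s + t) b = f s (f t b))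
    (hcont : Tendsto (fun r => f r b) (𝓝[>] 0) (𝓝 b))
    {ts : ℕ → ℝ} (hpos : ∀ n, 0 < ts n) (hlim : Tendsto ts atTop (𝓝 0))
    (hfix : ∀ n, f (ts n) b = b) {t : ℝ} (ht : 0 ≤ t) : f t b = b := by
  choose r hr hfr using fun n => exists_mem_Ico_apply_eq_apply hf0 hsemi (hpos n) (hfix n) ht
  have hr_lim : Tendsto r atTop (𝓝[≥] 0) :=
    tendsto_nhdsWithin_of_tendsto_nhds_of_eventually_within _
      (tendsto_of_tendsto_of_tendsto_of_le_of_le tendsto_const_nhds hlim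
        (fun n => (hr n).1) fun n => (hr n).2.le)
      (Eventually.of_forall fun n => (hr n).1)
  have hcont_Ici : ContinuousWithinAt (fun r => f r b) (Ici 0) 0 :=
    continuousWithinAt_Ioi_iff_Ici.mp (by show Tendsto _ _ (𝓝 (f 0 b)); rwa [hf0])
  have hconst : Tendsto (fun _ : ℕ => f t b) atTop (𝓝 (f 0 b)) :=
    (hcont_Ici.tendsto.comp hr_lim).congr fun n => (hfr n).symm
  exact (tendsto_const_nhds_iff.mp hconst).trans hf0

end FixedPoint

theorem semigroup_fixed_point_of_sequence_general
    {A : Type*} [NormedAddCommGroup A]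
    (Ω : Set A)
    (f : ℝ → A → A)
    (hf0 : ∀ b ∈ Ω, f 0 b = b)
    (hsemi : ∀ s t : ℝ, 0 ≤ s → 0 ≤ t → ∀ b ∈ Ω, f (s + t) b = f s (f t b))
    (hloc : ∀ b' ∈ Ω, ∃ δ > 0, ball b' δ ⊆ Ω ∧
      TendstoUniformlyOn (fun t b => f t b) id (𝓝[>] (0:ℝ)) (ball b' δ))
    (b : A) (hb : b ∈ Ω)
    (ts : ℕ → ℝ) (hpos : ∀ n, 0 < ts n)
    (hlim : Tendsto ts atTop (𝓝 0))
    (hfix : ∀ n, f (ts n) b = b) :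
    ∀ t : ℝ, 0 ≤ t → f t b = b := by
  obtain ⟨δ, hδ, -, hunif⟩ := hloc b hb
  intro t ht
  exact apply_eq_self_of_tendsto_nhdsGT (hf0 b hb) (fun s t hs ht => hsemi s t hs ht b hb)
    (hunif.tendsto_at (mem_ball_self hδ)) hpos hlim hfix ht

/-- For a composition semigroup of analytic self-maps of an open set `Ω` in a complex
Banach space satisfying (H1) locally at every point: if `f_{t_n}(b) = b` for some
sequence `t_n ↓ 0` of positive times, then `f_t(b) = b` for all `t ≥ 0`. -/
theorem semigroup_fixed_point_of_sequence
    {A : Type*} [NormedAddCommGroup A] [NormedSpace ℂ A] [CompleteSpace A]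
    (Ω : Set A) (hΩ : IsOpen Ω)
    (f : ℝ → A → A)
    (hf0 : ∀ b ∈ Ω, f 0 b = b)
    (hmaps : ∀ t : ℝ, 0 ≤ t → Set.MapsTo (f t) Ω Ω)
    (hsemi : ∀ s t : ℝ, 0 ≤ s → 0 ≤ t → ∀ b ∈ Ω, f (s + t) b = f s (f t b))
    (hanal : ∀ t : ℝ, 0 ≤ t → AnalyticOnNhd ℂ (f t) Ω)
    (hloc : ∀ b' ∈ Ω, ∃ δ > 0, ball b' δ ⊆ Ω ∧
      TendstoUniformlyOn (fun t b => f t b) id (𝓝[>] (0:ℝ)) (ball b' δ))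
    (b : A) (hb : b ∈ Ω)
    (ts : ℕ → ℝ) (hpos : ∀ n, 0 < ts n) (hanti : Antitone ts)
    (hlim : Tendsto ts atTop (𝓝 0))
    (hfix : ∀ n, f (ts n) b = b) :
    ∀ t : ℝ, 0 ≤ t → f t b = b :=
  semigroup_fixed_point_of_sequence_general Ω f hf0 hsemi hloc b hb ts hpos hlim hfix
end
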